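/- arXiv:1304.6937 — 2 statements merged into one kernel-verified Lean document; each statement's English description precedes it below -/
import Mathlib

section
/- The function H₁(t) = (1/2)·sinc²(t/2) + (1/4)·[sinc²((t-π)/2) + sinc²((t+π)/2)] satisfies H₁(t) ≥ 2/t² for all real t with |t| ≥ π/√3, where sinc(x) = sin(x)/x (with sinc(0)=1). -/
noncomputable def mysinc (x : ℝ) : ℝ := if x = 0 then 1 else Real.sin x / x

/-!
Bound each `mysinc² x` below by `(sin x / x)²`, which differs only by the junk value `0` at `x = 0`.
With `s = sin (t/2)`, `c = cos (t/2)` the shifted arguments `(t ∓ π)/2` have `sin² = c²`, so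
it suffices that `2 (s² + c²) / t² ≤ 2 s² / t² + c² (1 / (t - π)² + 1 / (t + π)²)`. This follows
from `2 / t² ≤ 1 / (t - a)² + 1 / (t + a)²`, which is equivalent to `a² ≤ 3 t²` (clear denominators),
except at `t = ±π`, where `c² = 0`.
-/

open Real

lemma sin_div_sq_le_mysinc_sq (x : ℝ) : (sin x / x) ^ 2 ≤ mysinc x ^ 2 := by
  unfold mysinc
  split_ifs with hx <;> simp [hx]

lemma two_div_sq_le_inv_sq_sub_add_inv_sq_add {a t : ℝ} (h : a ^ 2 ≤ 3 * t ^ 2)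
    (hne : t ^ 2 ≠ a ^ 2) : 2 / t ^ 2 ≤ 1 / (t - a) ^ 2 + 1 / (t + a) ^ 2 := by
  have ht : t ≠ 0 := by
    rintro rfl
    exact hne (by nlinarith)
  have hsub : t - a ≠ 0 := fun h' => hne (by rw [sub_eq_zero.mp h'])
  have hadd : t + a ≠ 0 := fun h' => hne (by rw [eq_neg_of_add_eq_zero_left h', neg_sq])
  rw [div_add_div _ _ (pow_ne_zero 2 hsub) (pow_ne_zero 2 hadd),
    div_le_div_iff₀ (by positivity) (by positivity)]
  nlinarith [sq_nonneg a, sq_nonneg t]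

lemma cos_half_sq_eq_zero_of_sq_eq_pi_sq {t : ℝ} (ht : t ^ 2 = π ^ 2) : cos (t / 2) ^ 2 = 0 := by
  have habs : |t| = π := by
    rw [← sq_eq_sq₀ (abs_nonneg t) pi_pos.le, sq_abs, ht]
  rw [cos_sq, mul_div_cancel₀ t two_ne_zero, ← cos_abs t, habs, cos_pi]
  norm_num

lemma sin_sub_pi_half_sq (t : ℝ) : sin ((t - π) / 2) ^ 2 = cos (t / 2) ^ 2 := by
  rw [show (t - π) / 2 = t / 2 - π / 2 by ring, sin_sub_pi_div_two, neg_sq]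

lemma sin_add_pi_half_sq (t : ℝ) : sin ((t + π) / 2) ^ 2 = cos (t / 2) ^ 2 := by
  rw [show (t + π) / 2 = t / 2 + π / 2 by ring, sin_add_pi_div_two]

theorem stmt6 (t : ℝ) (ht : Real.pi / Real.sqrt 3 ≤ |t|) :
    2 / t ^ 2 ≤
      (1 / 2) * mysinc (t / 2) ^ 2 +
        (1 / 4) * (mysinc ((t - Real.pi) / 2) ^ 2 + mysinc ((t + Real.pi) / 2) ^ 2) := by
  have hpi3 : π ^ 2 ≤ 3 * t ^ 2 := by
    have := pow_le_pow_left₀ (by positivity) ht 2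
    rw [div_pow, sq_sqrt (by norm_num), sq_abs, div_le_iff₀ (by norm_num)] at this
    linarith
  have hcos : cos (t / 2) ^ 2 * (2 / t ^ 2)
      ≤ cos (t / 2) ^ 2 * (1 / (t - π) ^ 2 + 1 / (t + π) ^ 2) := by
    rcases eq_or_ne (cos (t / 2) ^ 2) 0 with hc | hc
    · simp [hc]
    · exact mul_le_mul_of_nonneg_left
        (two_div_sq_le_inv_sq_sub_add_inv_sq_add hpi3
          (mt cos_half_sq_eq_zero_of_sq_eq_pi_sq hc)) (sq_nonneg _)
  calc 2 / t ^ 2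
      = 2 * sin (t / 2) ^ 2 / t ^ 2 + cos (t / 2) ^ 2 * (2 / t ^ 2) := by
        linear_combination (-2 / t ^ 2) * sin_sq_add_cos_sq (t / 2)
    _ ≤ 2 * sin (t / 2) ^ 2 / t ^ 2 + cos (t / 2) ^ 2 * (1 / (t - π) ^ 2 + 1 / (t + π) ^ 2) := by
        gcongr
    _ = (1 / 2) * (sin (t / 2) / (t / 2)) ^ 2 + (1 / 4) * ((sin ((t - π) / 2) / ((t - π) / 2)) ^ 2
          + (sin ((t + π) / 2) / ((t + π) / 2)) ^ 2) := by
        rw [div_pow (sin ((t - π) / 2)), div_pow (sin ((t + π) / 2)), sin_sub_pi_half_sq, sin_add_pi_half_sq]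
        simp only [div_pow, div_div_eq_mul_div]
        ring
    _ ≤ _ := by
        gcongr (1 / 2) * ?_ + (1 / 4) * (?_ + ?_) <;> exact sin_div_sq_le_mysinc_sq _
end

section
/- For 0 ≤ λ ≤ 1 and 0 ≤ x ≤ 1, the inequality √(1 - λx) ≤ ((1+λ)/2)·√(1-x)·(1 + ((1-λ)/(1+λ))·1/(1-x)) holds (for x < 1). -/
/-!
Since `(1 + λ)(1 - x) + (1 - λ) = (1 - λx) + (1 - x)`, the right-hand side equals
`((1 - λx) + (1 - x)) / (2 √(1 - x))`, so the inequality is AM-GM for `√(1 - λx)` and `√(1 - x)`.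
-/

theorem Real.sqrt_le_add_div_two_mul_sqrt {a b : ℝ} (ha : 0 ≤ a) (hb : 0 < b) :
    √a ≤ (a + b) / (2 * √b) := by
  rw [le_div_iff₀ (by positivity)]
  have := two_mul_le_add_sq (√a) (√b)
  rw [Real.sq_sqrt ha, Real.sq_sqrt hb.le] at this
  linarith

theorem stmt7_general (lam x : ℝ) (h0 : 0 ≤ lam) (h1 : lam ≤ 1) (hx1 : x < 1) :
    Real.sqrt (1 - lam * x) ≤
      ((1 + lam) / 2) * Real.sqrt (1 - x) * (1 + ((1 - lam) / (1 + lam)) * (1 / (1 - x))) := by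
  have hb : 0 < 1 - x := by linarith
  have ha : 0 ≤ 1 - lam * x := by nlinarith
  have hs : √(1 - x) ≠ 0 := (Real.sqrt_pos.mpr hb).ne'
  have hs2 : √(1 - x) ^ 2 = 1 - x := Real.sq_sqrt hb.le
  have rhs_eq : ((1 + lam) / 2) * √(1 - x) * (1 + ((1 - lam) / (1 + lam)) * (1 / (1 - x)))
      = ((1 - lam * x) + (1 - x)) / (2 * √(1 - x)) := by
    field_simp
    linear_combination (2 - x - lam * x) * hs2
  rw [rhs_eq]
  exact Real.sqrt_le_add_div_two_mul_sqrt ha hb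

theorem stmt7 (lam x : ℝ) (h0 : 0 ≤ lam) (h1 : lam ≤ 1) (hx0 : 0 ≤ x) (hx1 : x < 1) :
    Real.sqrt (1 - lam * x) ≤
      ((1 + lam) / 2) * Real.sqrt (1 - x) * (1 + ((1 - lam) / (1 + lam)) * (1 / (1 - x))) :=
  stmt7_general lam x h0 h1 hx1
end
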